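/- Assume the root-subgroup data with the full-uniqueness Bruhat decomposition: G = U⁻NU⁺ and whenever u₁⁻n₁u₁⁺ = u₂⁻n₂u₂⁺ with u_i^± ∈ U^± and n_i ∈ N, then u₁⁻ = u₂⁻, n₁ = n₂ and u₁⁺ = u₂⁺. Let U ≤ G be a subgroup such that U = (U∩U⁻)(U∩U⁺)(U∩N) = (U∩U⁺)(U∩U⁻)(U∩N) and, for every linear ordering of Φ⁺_red (resp. Φ⁻_red), the multiplication map ∏_α (U∩U_α) → U∩U⁺ (resp. → U∩U⁻) is bijective. Let X ≤ Z be a subgroup normalizing U. Then K := UX = XU is a subgroup of G satisfying condition (3.1), and moreover K ∩ U_α = U ∩ U_α for every α ∈ Φ_red, K ∩ U⁺ = U ∩ U⁺, K ∩ U⁻ = U ∩ U⁻, and K ∩ N = (U∩N)X. (Abstract form of the paper's Corollary that X_{x,f} satisfies condition (3.1).) -/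

import Mathlib

/-!
Since `X` normalizes `U`, the join `U ⊔ X` is the product set `U X = X U`. Uniqueness in the
big cell `U⁻ N U⁺` then pins down its intersections with `U⁺`, `U⁻` and `N`: write an element
of `K` as `x u` with `x ∈ X` and `u = n a b` factored inside `U` (`n ∈ U ∩ N`, `a ∈ U ∩ U⁻`,
`b ∈ U ∩ U⁺`). If `x u ∈ U⁺`, comparing `(x n)⁻¹ (x u) = a b` forces `x n = 1`, so `x ∈ U`;
inversion swaps `U⁺` and `U⁻` and gives the same for `U⁻`. If instead `u x = a b n x ∈ N`,
uniqueness forces `a = b = 1`. Condition (3.1) for `K` follows, since the subgroups it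
involves are those of `U`, except that `K ∩ N = (U ∩ N) X` absorbs the factor `X`.
-/

open Pointwise

section AxiomaticFramework

variable {G : Type*} [Group G] {ι : Type*}

/-- The subgroup generated by the root subgroups `U α` for `α ∈ s`. -/
def genU (U : ι → Subgroup G) (s : Finset ι) : Subgroup G := ⨆ α ∈ s, U α

/-- The multiplication map attached to an enumeration `l` of a set of roots is a
bijection from `∏ (K ∩ U α)` onto `K ∩ T`. -/
def ProdBij (U : ι → Subgroup G) (K T : Subgroup G) (l : List ι) : Prop :=
  Function.Injective
    (fun x : ∀ i : Fin l.length, ↥(K ⊓ U (l.get i)) =>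
      (List.ofFn fun i => ((x i : G))).prod) ∧
  Set.range
    (fun x : ∀ i : Fin l.length, ↥(K ⊓ U (l.get i)) =>
      (List.ofFn fun i => ((x i : G))).prod)
    = ((K ⊓ T : Subgroup G) : Set G)

/-- Condition (3.1) for a subgroup `K`, relative to root subgroups `U`,
reduced positive roots `PRp`, reduced negative roots `PRm`, `U⁺ = Up`, `U⁻ = Um`, `N`. -/
def Cond31 (U : ι → Subgroup G) (PRp PRm : Finset ι) (Up Um N K : Subgroup G) : Prop :=
  ((K : Set G) = ↑(K ⊓ Um) * ↑(K ⊓ Up) * ↑(K ⊓ N)) ∧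
  ((K : Set G) = ↑(K ⊓ Up) * ↑(K ⊓ Um) * ↑(K ⊓ N)) ∧
  (∀ l : List ι, l.Nodup → (∀ a, a ∈ l ↔ a ∈ PRp) → ProdBij U K Up l) ∧
  (∀ l : List ι, l.Nodup → (∀ a, a ∈ l ↔ a ∈ PRm) → ProdBij U K Um l)

/-- Condition (3.2) for a subgroup `K`. -/
def Cond32 (Up Um Z K : Subgroup G) : Prop :=
  (K : Set G) = ↑(K ⊓ Up) * ↑(K ⊓ Um) * ↑(K ⊓ Up) * ↑(K ⊓ Z)

/-- Root-subgroup data: a finite set of roots `Phi` with a distinguished subset `PhiRed`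
and a partition `Phi = PhiP ⊔ PhiM`, root subgroups `U α`, and subgroups `Z ≤ N`. -/
structure RootData (G : Type*) [Group G] (ι : Type*) [DecidableEq ι] where
  Phi : Finset ι
  PhiRed : Finset ι
  PhiP : Finset ι
  PhiM : Finset ι
  red_sub : PhiRed ⊆ Phi
  union_eq : PhiP ∪ PhiM = Phi
  disj : Disjoint PhiP PhiM
  U : ι → Subgroup G
  Z : Subgroup G
  N : Subgroup G
  hZN : Z ≤ N

variable [DecidableEq ι]

namespace RootData

variable (D : RootData G ι)

/-- `U⁺`, the subgroup generated by the `U α`, `α ∈ Φ⁺`. -/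
def Up : Subgroup G := genU D.U D.PhiP

/-- `U⁻`, the subgroup generated by the `U α`, `α ∈ Φ⁻`. -/
def Um : Subgroup G := genU D.U D.PhiM

/-- Condition (3.1) with respect to `G`. -/
def cond31 (K : Subgroup G) : Prop :=
  Cond31 D.U (D.PhiRed ∩ D.PhiP) (D.PhiRed ∩ D.PhiM) D.Up D.Um D.N K

/-- Condition (3.2) with respect to `G`. -/
def cond32 (K : Subgroup G) : Prop := Cond32 D.Up D.Um D.Z K

end RootData

end AxiomaticFramework

section

variable {G : Type*} [Group G]

def UniqueTripleProduct (A N B : Subgroup G) : Prop :=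
  ∀ a₁ n₁ b₁ a₂ n₂ b₂ : G, a₁ ∈ A → n₁ ∈ N → b₁ ∈ B → a₂ ∈ A → n₂ ∈ N → b₂ ∈ B →
    a₁ * n₁ * b₁ = a₂ * n₂ * b₂ → a₁ = a₂ ∧ n₁ = n₂ ∧ b₁ = b₂

namespace UniqueTripleProduct

variable {A N B U X : Subgroup G}

theorem symm (h : UniqueTripleProduct A N B) : UniqueTripleProduct B N A := by
  intro b₁ n₁ a₁ b₂ n₂ a₂ hb₁ hn₁ ha₁ hb₂ hn₂ ha₂ he
  obtain ⟨ha, hn, hb⟩ := h a₁⁻¹ n₁⁻¹ b₁⁻¹ a₂⁻¹ n₂⁻¹ b₂⁻¹ (inv_mem ha₁) (inv_mem hn₁)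
    (inv_mem hb₁) (inv_mem ha₂) (inv_mem hn₂) (inv_mem hb₂)
    (by simpa only [mul_inv_rev, mul_assoc] using congrArg (·⁻¹) he)
  exact ⟨inv_injective hb, inv_injective hn, inv_injective ha⟩

theorem eq_one_of_mul_mul_mem_right (h : UniqueTripleProduct A N B) {n a b : G}
    (hn : n ∈ N) (ha : a ∈ A) (hb : b ∈ B) (hnab : n * a * b ∈ B) : n = 1 :=
  inv_eq_one.mp (h 1 n⁻¹ (n * a * b) a 1 b (one_mem A) (inv_mem hn) hnab ha (one_mem N) hb
    (by group)).2.1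

theorem eq_one_of_mul_mem (h : UniqueTripleProduct A N B) {a b : G}
    (ha : a ∈ A) (hb : b ∈ B) (hab : a * b ∈ N) : a = 1 ∧ b = 1 := by
  obtain ⟨ha1, -, hb1⟩ := h a 1 b 1 (a * b) 1 ha (one_mem N) hb (one_mem A) hab (one_mem B)
    (by group)
  exact ⟨ha1, hb1⟩

theorem sup_inf_right_eq (h : UniqueTripleProduct A N B) (hXN : X ≤ N)
    (hXU : X ≤ Subgroup.normalizer (U : Set G))
    (hU : (U : Set G) = ↑(U ⊓ B) * ↑(U ⊓ A) * ↑(U ⊓ N)) :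
    (U ⊔ X) ⊓ B = U ⊓ B := by
  refine le_antisymm (fun g hg => ⟨?_, hg.2⟩) (inf_le_inf_right B le_sup_left)
  have hgK : g ∈ ((X ⊔ U : Subgroup G) : Set G) := sup_comm U X ▸ hg.1
  rw [Subgroup.coe_mul_of_left_le_normalizer_right X U hXU] at hgK
  obtain ⟨x, hx, u, hu, rfl⟩ := hgK
  have hu' : u⁻¹ ∈ (U : Set G) := inv_mem hu
  rw [hU] at hu'
  obtain ⟨_, ⟨b, hb, a, ha, rfl⟩, n, hn, hbanu⟩ := hu'
  have hu_eq : u = n⁻¹ * a⁻¹ * b⁻¹ := by rw [← inv_inj, ← hbanu]; group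
  have hxn : x * n⁻¹ = 1 := by
    refine h.eq_one_of_mul_mul_mem_right (mul_mem (hXN hx) (inv_mem hn.2)) (inv_mem ha.2)
      (inv_mem hb.2) ?_
    rw [show x * n⁻¹ * a⁻¹ * b⁻¹ = x * u by rw [hu_eq]; group]
    exact hg.2
  rw [mul_inv_eq_one.mp hxn]
  exact mul_mem hn.1 hu

theorem sup_inf_left_eq (h : UniqueTripleProduct A N B) (hXN : X ≤ N)
    (hXU : X ≤ Subgroup.normalizer (U : Set G))
    (hU : (U : Set G) = ↑(U ⊓ A) * ↑(U ⊓ B) * ↑(U ⊓ N)) :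
    (U ⊔ X) ⊓ A = U ⊓ A :=
  h.symm.sup_inf_right_eq hXN hXU hU

theorem coe_sup_inf_eq_mul (h : UniqueTripleProduct A N B) (hXN : X ≤ N)
    (hXU : X ≤ Subgroup.normalizer (U : Set G))
    (hU : (U : Set G) = ↑(U ⊓ A) * ↑(U ⊓ B) * ↑(U ⊓ N)) :
    (((U ⊔ X) ⊓ N : Subgroup G) : Set G) = ((U ⊓ N : Subgroup G) : Set G) * X := by
  refine subset_antisymm ?_ ?_
  · intro g hg
    have hgK : g ∈ ((U ⊔ X : Subgroup G) : Set G) := hg.1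
    have hgN : g ∈ N := hg.2
    rw [Subgroup.coe_mul_of_right_le_normalizer_left U X hXU, hU] at hgK
    obtain ⟨_, ⟨_, ⟨a, ha, b, hb, rfl⟩, n, hn, rfl⟩, x, hx, rfl⟩ := hgK
    have hab := mul_mem hgN (inv_mem (mul_mem hn.2 (hXN hx)))
    rw [show a * b * n * x * (n * x)⁻¹ = a * b by group] at hab
    obtain ⟨rfl, rfl⟩ := h.eq_one_of_mul_mem ha.2 hb.2 hab
    exact ⟨n, hn, x, hx, by group⟩
  · rintro g ⟨n, hn, x, hx, rfl⟩
    exact ⟨mul_mem (Subgroup.mem_sup_left hn.1) (Subgroup.mem_sup_right hx),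
      mul_mem hn.2 (hXN hx)⟩

end UniqueTripleProduct

end

theorem inf_eq_inf_of_inf_eq_of_le {α : Type*} [SemilatticeInf α] {a a' b c : α}
    (h : a ⊓ c = a' ⊓ c) (hbc : b ≤ c) : a ⊓ b = a' ⊓ b := by
  rw [← inf_eq_right.mpr hbc, ← inf_assoc, h, inf_assoc]

section

variable {G : Type*} [Group G] {ι : Type*}

theorem le_genU (U : ι → Subgroup G) {s : Finset ι} {α : ι} (hα : α ∈ s) :
    U α ≤ genU U s :=
  le_iSup₂ (f := fun β (_ : β ∈ s) => U β) α hα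

theorem ProdBij.of_inf_eq {U : ι → Subgroup G} {K K' T : Subgroup G} {l : List ι}
    (h : ProdBij U K' T l) (hα : ∀ α ∈ l, K ⊓ U α = K' ⊓ U α) (hT : K ⊓ T = K' ⊓ T) :
    ProdBij U K T l := by
  have hf : (fun i : Fin l.length => K ⊓ U (l.get i)) = fun i => K' ⊓ U (l.get i) :=
    funext fun i => hα _ (l.get_mem i)
  rw [ProdBij, hT]
  exact (congrArg (fun f : Fin l.length → Subgroup G =>
    Function.Injective (fun x : ∀ i, ↥(f i) => (List.ofFn fun i => (x i : G)).prod) ∧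
      Set.range (fun x : ∀ i, ↥(f i) => (List.ofFn fun i => (x i : G)).prod)
        = ((K' ⊓ T : Subgroup G) : Set G)) hf).mpr h

end

theorem stmt8_general {G : Type*} [Group G] {ι : Type*} [DecidableEq ι]
    (D : RootData G ι)
    (bruhat_uniq : ∀ u₁ n₁ v₁ u₂ n₂ v₂ : G, u₁ ∈ D.Um → n₁ ∈ D.N → v₁ ∈ D.Up →
      u₂ ∈ D.Um → n₂ ∈ D.N → v₂ ∈ D.Up → u₁ * n₁ * v₁ = u₂ * n₂ * v₂ →
      u₁ = u₂ ∧ n₁ = n₂ ∧ v₁ = v₂)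
    (Usub : Subgroup G) (hU31 : D.cond31 Usub)
    (X : Subgroup G) (hXZ : X ≤ D.Z)
    (hXnorm : ∀ x ∈ X, ∀ u ∈ Usub, x * u * x⁻¹ ∈ Usub) :
    ((Usub ⊔ X : Subgroup G) : Set G) = (Usub : Set G) * (X : Set G) ∧
    ((Usub ⊔ X : Subgroup G) : Set G) = (X : Set G) * (Usub : Set G) ∧
    D.cond31 (Usub ⊔ X) ∧
    (∀ α ∈ D.PhiRed, (Usub ⊔ X) ⊓ D.U α = Usub ⊓ D.U α) ∧
    (Usub ⊔ X) ⊓ D.Up = Usub ⊓ D.Up ∧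
    (Usub ⊔ X) ⊓ D.Um = Usub ⊓ D.Um ∧
    (((Usub ⊔ X) ⊓ D.N : Subgroup G) : Set G) =
      ((Usub ⊓ D.N : Subgroup G) : Set G) * (X : Set G) := by
  obtain ⟨hU1, hU2, hU3, hU4⟩ := hU31
  have huniq : UniqueTripleProduct D.Um D.N D.Up := bruhat_uniq
  have hXN : X ≤ D.N := hXZ.trans D.hZN
  have hXU : X ≤ Subgroup.normalizer (Usub : Set G) := Subgroup.le_normalizer_iff.mpr hXnorm
  have hUX := Subgroup.coe_mul_of_right_le_normalizer_left Usub X hXU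
  have hUp := huniq.sup_inf_right_eq hXN hXU hU2
  have hUm := huniq.sup_inf_left_eq hXN hXU hU1
  have hN := huniq.coe_sup_inf_eq_mul hXN hXU hU1
  have hUα : ∀ α ∈ D.PhiRed, (Usub ⊔ X) ⊓ D.U α = Usub ⊓ D.U α := by
    intro α hα
    rcases Finset.mem_union.mp (D.union_eq ▸ D.red_sub hα) with hαP | hαM
    · exact inf_eq_inf_of_inf_eq_of_le hUp (le_genU D.U hαP)
    · exact inf_eq_inf_of_inf_eq_of_le hUm (le_genU D.U hαM)
  have hprod {T : Subgroup G} {s : Finset ι} {l : List ι} (hT : (Usub ⊔ X) ⊓ T = Usub ⊓ T)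
      (hl : ∀ a, a ∈ l ↔ a ∈ D.PhiRed ∩ s) (h : ProdBij D.U Usub T l) :
      ProdBij D.U (Usub ⊔ X) T l :=
    h.of_inf_eq (fun α hα => hUα α (Finset.mem_inter.mp ((hl α).mp hα)).1) hT
  refine ⟨hUX, hUX.trans (Subgroup.set_mul_normalizer_comm _ _ hXU).symm, ⟨?_, ?_,
    fun l hnd hl => hprod hUp hl (hU3 l hnd hl), fun l hnd hl => hprod hUm hl (hU4 l hnd hl)⟩,
    hUα, hUp, hUm, hN⟩
  · rw [hUm, hUp, hN, hUX, hU1, mul_assoc]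
  · rw [hUm, hUp, hN, hUX, hU2, mul_assoc]

/-- Assume the root-subgroup data with the full-uniqueness Bruhat
decomposition `G = U⁻NU⁺`. Let `U ≤ G` satisfy condition (3.1) and let `X ≤ Z`
normalize `U`. Then `K := UX = XU` is a subgroup of `G` satisfying condition (3.1),
and moreover `K ∩ U_α = U ∩ U_α` for all `α ∈ Φ_red`, `K ∩ U⁺ = U ∩ U⁺`,
`K ∩ U⁻ = U ∩ U⁻`, and `K ∩ N = (U ∩ N)X`. -/
theorem stmt8 {G : Type*} [Group G] {ι : Type*} [DecidableEq ι]
    (D : RootData G ι)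
    (bruhat_cover : (↑D.Um * ↑D.N * ↑D.Up : Set G) = Set.univ)
    (bruhat_uniq : ∀ u₁ n₁ v₁ u₂ n₂ v₂ : G, u₁ ∈ D.Um → n₁ ∈ D.N → v₁ ∈ D.Up →
      u₂ ∈ D.Um → n₂ ∈ D.N → v₂ ∈ D.Up → u₁ * n₁ * v₁ = u₂ * n₂ * v₂ →
      u₁ = u₂ ∧ n₁ = n₂ ∧ v₁ = v₂)
    (Usub : Subgroup G) (hU31 : D.cond31 Usub)
    (X : Subgroup G) (hXZ : X ≤ D.Z)
    (hXnorm : ∀ x ∈ X, ∀ u ∈ Usub, x * u * x⁻¹ ∈ Usub) :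
    ((Usub ⊔ X : Subgroup G) : Set G) = (Usub : Set G) * (X : Set G) ∧
    ((Usub ⊔ X : Subgroup G) : Set G) = (X : Set G) * (Usub : Set G) ∧
    D.cond31 (Usub ⊔ X) ∧
    (∀ α ∈ D.PhiRed, (Usub ⊔ X) ⊓ D.U α = Usub ⊓ D.U α) ∧
    (Usub ⊔ X) ⊓ D.Up = Usub ⊓ D.Up ∧
    (Usub ⊔ X) ⊓ D.Um = Usub ⊓ D.Um ∧
    (((Usub ⊔ X) ⊓ D.N : Subgroup G) : Set G) =
      ((Usub ⊓ D.N : Subgroup G) : Set G) * (X : Set G) :=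
  stmt8_general D bruhat_uniq Usub hU31 X hXZ hXnorm
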